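/- arXiv:2409.04074 — 2 statements merged into one kernel-verified Lean document; each statement's English description precedes it below -/
import Mathlib

section
/- With the round allocation where vertex v is twisted (one unit per round, with sign sgn(t(v))) in rounds 1 through |t(v)|, the spirality of every edge uv after each round lies in the closed interval between its spirality before that round and its target spirality. In particular, |s_i(u,v)| ≤ max(|s_0(u,v)|, |s_Q(u,v)|) for every round i. -/
/-- `tau t i` is the signed twist performed in round `i ≥ 1` at a vertex with
twist requirement `t`: `sign t` if `i ≤ |t|`, else `0`. -/
def tau (t : ℤ) (i : ℕ) : ℤ := if (i : ℤ) ≤ |t| then Int.sign t else 0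

lemma tau_step (t : ℤ) (n : ℕ) :
    tau t (n+1) = max (t - n) (min (t + n) 0) -
      max (t - ((n:ℤ)+1)) (min (t + ((n:ℤ)+1)) 0) := by
  unfold tau
  rcases lt_trichotomy t 0 with h | h | h
  · rw [abs_of_neg h, Int.sign_eq_neg_one_of_neg h]
    split_ifs with h1 <;> push_cast at * <;> omega
  · subst h; simp; push_cast; omega
  · rw [abs_of_pos h, Int.sign_eq_one_of_pos h]
    split_ifs with h1 <;> push_cast at * <;> omega

set_option maxHeartbeats 2000000 in
theorem stmt7 (tu tv sQ : ℤ) (s : ℕ → ℤ)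
    (hinit : s 0 - sQ = tu - tv)
    (hstep : ∀ i : ℕ, s (i+1) = s i - tau tu (i+1) + tau tv (i+1)) :
    (∀ i : ℕ, min (s i) sQ ≤ s (i+1) ∧ s (i+1) ≤ max (s i) sQ) ∧
    (∀ i, |s i| ≤ max |s 0| |sQ|) ∧
    (∀ K : ℕ, |tu| ≤ (K:ℤ) → |tv| ≤ (K:ℤ) → s K = sQ) := by
  have hs : ∀ i : ℕ, s i = sQ + (max (tu - i) (min (tu + i) 0)
      - max (tv - i) (min (tv + i) 0)) := by
    intro i
    induction i with
    | zero => push_cast; omega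
    | succ n ih =>
      rw [hstep n, ih, tau_step tu n, tau_step tv n]
      push_cast
      ring
  refine ⟨?_, ?_, ?_⟩
  · intro i
    have h1 := hs i
    have h2 := hs (i+1)
    push_cast at h2
    omega
  · intro i
    have h0 := hs 0
    have h1 := hs i
    push_cast at h0
    rcases abs_cases (s i) with ⟨e1, _⟩ | ⟨e1, _⟩ <;>
      rcases abs_cases (s 0) with ⟨e2, _⟩ | ⟨e2, _⟩ <;>
        rcases abs_cases sQ with ⟨e3, _⟩ | ⟨e3, _⟩ <;>
          rw [e1, e2, e3] <;> omega
  · intro K hu hv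
    have h1 := hs K
    rw [abs_le] at hu hv
    omega
end

section
/- If edge uv requires Δs(u,v) = t(u) − t(v) with t(u) ≥ t(v), then under the round allocation (vertex w twisted with sign sgn(t(w)) in rounds 1..|t(w)|): in every round the spirality of uv changes by 0, −1, or −2, it never increases, and the total change over all rounds is exactly −(t(u) − t(v)). -/
lemma tau_eq (t : ℤ) (i : ℕ) (hi : 1 ≤ i) :
    tau t i = if (i : ℤ) ≤ t then 1 else if t ≤ -(i : ℤ) then -1 else 0 := by
  have hi' : (1 : ℤ) ≤ (i : ℤ) := by exact_mod_cast hi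
  unfold tau
  rcases lt_trichotomy t 0 with ht | ht | ht
  · rw [abs_of_neg ht, Int.sign_eq_neg_one_of_neg ht]
    split_ifs <;> omega
  · subst ht; simp; omega
  · rw [abs_of_pos ht, Int.sign_eq_one_of_pos ht]
    split_ifs <;> omega

lemma tau_mono (tu tv : ℤ) (h : tv ≤ tu) (i : ℕ) (hi : 1 ≤ i) :
    tau tv i ≤ tau tu i := by
  rw [tau_eq tu i hi, tau_eq tv i hi]
  split_ifs <;> omega

lemma tau_sum (t : ℤ) (N : ℕ) (hN : t.natAbs ≤ N) :
    (∑ i ∈ Finset.Icc 1 N, tau t i) = t := by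
  have : ∀ i ∈ Finset.Icc 1 N, tau t i = if i ∈ Finset.Icc 1 t.natAbs then Int.sign t else 0 := by
    intro i hi
    simp only [Finset.mem_Icc] at hi ⊢
    unfold tau
    have : (i : ℤ) ≤ |t| ↔ i ≤ t.natAbs := by
      rw [Int.abs_eq_natAbs]; exact_mod_cast Iff.rfl
    split_ifs with h1 h2 h2 <;> omega
  rw [Finset.sum_congr rfl this, Finset.sum_ite_mem,
    Finset.inter_eq_right.mpr (by intro i hi; simp only [Finset.mem_Icc] at *; omega),
    Finset.sum_const, Nat.card_Icc]
  simp only [nsmul_eq_mul, Nat.add_sub_cancel]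
  rw [mul_comm]
  exact_mod_cast Int.sign_mul_natAbs t

theorem stmt15 (tu tv : ℤ) (h : tv ≤ tu) :
    (∀ i : ℕ, 1 ≤ i → (-(tau tu i) + tau tv i) ∈ ({0, -1, -2} : Set ℤ)) ∧
    (∀ i : ℕ, 1 ≤ i → -(tau tu i) + tau tv i ≤ 0) ∧
    (∑ i ∈ Finset.Icc 1 (max tu.natAbs tv.natAbs), (-(tau tu i) + tau tv i))
      = -(tu - tv) := by
  refine ⟨?_, ?_, ?_⟩
  · intro i hi
    have := tau_mono tu tv h i hi
    rw [tau_eq tu i hi, tau_eq tv i hi] at *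
    simp only [Set.mem_insert_iff, Set.mem_singleton_iff]
    split_ifs at * <;> omega
  · intro i hi
    have := tau_mono tu tv h i hi
    omega
  · rw [Finset.sum_add_distrib, Finset.sum_neg_distrib,
      tau_sum tu _ (le_max_left _ _), tau_sum tv _ (le_max_right _ _)]
    ring
end
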